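/- For any connected graph G of order n(G), size m(G), and independence number α(G), the corona H = G ⊙ K_1 is γ-q-critical with q = m(G) + 1 + α(G). -/

import Mathlib

open SimpleGraph

/-- `D` is a dominating set of `G`. -/
def SimpleGraph.IsDomSet {V : Type*} (G : SimpleGraph V) (D : Set V) : Prop :=
  ∀ v ∉ D, ∃ u ∈ D, G.Adj u v

/-- The domination number of `G`. -/
noncomputable def SimpleGraph.domNum {V : Type*} [Fintype V] (G : SimpleGraph V) : ℕ :=
  sInf {k | ∃ D : Finset V, D.card = k ∧ G.IsDomSet ↑D}

/-- The graph obtained from `G` by subdividing each edge in `F` once: each `e ∈ F`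
contributes a new vertex adjacent to the two endpoints of `e`, and the edges of `F`
are removed. -/
def SimpleGraph.subdiv {V : Type*} (G : SimpleGraph V) (F : Finset (Sym2 V)) :
    SimpleGraph (V ⊕ {e : Sym2 V // e ∈ F}) :=
  SimpleGraph.fromRel (fun a b => match a, b with
    | Sum.inl u, Sum.inl v => G.Adj u v ∧ s(u, v) ∉ F
    | Sum.inl u, Sum.inr e => u ∈ (e : Sym2 V)
    | _, _ => False)

/-- `G` is `γ`-`q`-critical: subdividing any `q` edges increases the domination number,
while some set of `q - 1` edges can be subdivided without increasing it. -/
def SimpleGraph.IsQCritical {V : Type*} [Fintype V] (G : SimpleGraph V) (q : ℕ) : Prop :=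
  (∀ F : Finset (Sym2 V), ↑F ⊆ G.edgeSet → F.card = q →
      G.domNum < (G.subdiv F).domNum) ∧
  (∃ F : Finset (Sym2 V), ↑F ⊆ G.edgeSet ∧ F.card = q - 1 ∧
      (G.subdiv F).domNum = G.domNum)

/-- The corona `G ⊙ K₁`: attach one pendant leaf to every vertex of `G`. -/
def SimpleGraph.corona {V : Type*} (G : SimpleGraph V) : SimpleGraph (V ⊕ V) :=
  SimpleGraph.fromRel (fun a b => match a, b with
    | Sum.inl u, Sum.inl v => G.Adj u v
    | Sum.inl u, Sum.inr v => u = v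
    | _, _ => False)

/-- The independence number of `G`. -/
noncomputable def SimpleGraph.indepNumFin {V : Type*} [Fintype V] (G : SimpleGraph V) : ℕ :=
  sSup {k | ∃ A : Finset V, A.card = k ∧ ∀ x ∈ A, ∀ y ∈ A, ¬ G.Adj x y}

/-!
Subdividing a set `F` of edges of `G ⊙ K₁` leaves the closed neighbourhoods of the `n` leaves
pairwise disjoint, so `γ(H_F) ≥ n = γ(G ⊙ K₁)`. If `F` subdivides an edge `uv` of `G` together
with both pendant edges at `u` and `v`, the new vertex on `uv` has a closed neighbourhood disjoint
from all of these, and `γ(H_F) > n`. Otherwise the neighbours of the leaves dominate `H_F`.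

Such an edge must exist once `|F| > m(G) + α(G)`. Indeed, let `B` be the set of vertices whose
pendant edge lies in `F`. Then `|B| ≤ α(G) + e(G[B])` (delete one end of each edge inside `B`), and
without such an edge `F` contains none of the `e(G[B])` edges inside `B`. All edges of `G` together
with the pendant edges at a maximum independent set attain `m(G) + α(G)` without such an edge.
-/

namespace Sym2

variable {α β : Type*}

@[simp] lemma map_inl_ne_mk_inr (e : Sym2 α) (a : α ⊕ β) (b : β) : e.map .inl ≠ s(a, .inr b) := by
  intro he
  have hb : (.inr b : α ⊕ β) ∈ e.map .inl := he ▸ mem_mk_right a _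
  simp [mem_map] at hb

@[simp] lemma mk_inr_ne_map_inl (e : Sym2 α) (a : α ⊕ β) (b : β) : s(a, .inr b) ≠ e.map .inl :=
  (map_inl_ne_mk_inr e a b).symm

end Sym2

namespace SimpleGraph

variable {V W : Type*}

section Adjacency

variable {G : SimpleGraph V} {u v : V}

@[simp] lemma corona_adj_inl_inl : G.corona.Adj (.inl u) (.inl v) ↔ G.Adj u v := by
  simp only [corona, fromRel_adj, ne_eq, Sum.inl.injEq]
  exact ⟨fun h => h.2.elim id (·.symm), fun h => ⟨h.ne, .inl h⟩⟩

@[simp] lemma corona_adj_inl_inr : G.corona.Adj (.inl u) (.inr v) ↔ u = v := by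
  simp [corona]

@[simp] lemma corona_adj_inr_inl : G.corona.Adj (.inr u) (.inl v) ↔ u = v := by
  simp [corona, eq_comm]

@[simp] lemma corona_adj_inr_inr : ¬ G.corona.Adj (.inr u) (.inr v) := by
  simp [corona]

variable {F : Finset (Sym2 V)} {e : {e : Sym2 V // e ∈ F}}

@[simp] lemma subdiv_adj_inl_inl :
    (G.subdiv F).Adj (.inl u) (.inl v) ↔ G.Adj u v ∧ s(u, v) ∉ F := by
  simp only [subdiv, fromRel_adj, ne_eq, Sum.inl.injEq, Sym2.eq_swap (a := v)]
  exact ⟨fun h => h.2.elim id fun h' => ⟨h'.1.symm, h'.2⟩,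
    fun h => ⟨h.1.ne, .inl h⟩⟩

@[simp] lemma subdiv_adj_inl_inr : (G.subdiv F).Adj (.inl u) (.inr e) ↔ u ∈ (e : Sym2 V) := by
  simp [subdiv]

@[simp] lemma subdiv_adj_inr_inl : (G.subdiv F).Adj (.inr e) (.inl u) ↔ u ∈ (e : Sym2 V) := by
  simp [subdiv]

@[simp] lemma subdiv_adj_inr_inr {e' : {e : Sym2 V // e ∈ F}} :
    ¬ (G.subdiv F).Adj (.inr e) (.inr e') := by
  simp [subdiv]

end Adjacency

def coronaEdge : V ⊕ Sym2 V ↪ Sym2 (V ⊕ V) where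
  toFun := Sum.elim (fun v => s(.inl v, .inr v)) (Sym2.map .inl)
  inj' := by
    rintro (u | e) (v | e') (h : Sum.elim _ _ _ = Sum.elim _ _ _) <;>
      simp only [Sum.elim_inl, Sum.elim_inr] at h
    · simpa using h
    · exact absurd h (Sym2.mk_inr_ne_map_inl _ _ _)
    · exact absurd h (Sym2.map_inl_ne_mk_inr _ _ _)
    · simpa using Sym2.map.injective Sum.inl_injective h

@[simp] lemma coronaEdge_inl (v : V) : coronaEdge (.inl v) = s(.inl v, .inr v) := rfl

@[simp] lemma coronaEdge_inr (e : Sym2 V) : coronaEdge (.inr e) = e.map .inl := rfl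

open Finset in
lemma corona_edgeSet [Fintype V] (G : SimpleGraph V) [Fintype G.edgeSet] :
    G.corona.edgeSet = ↑((univ.disjSum G.edgeFinset).map coronaEdge) := by
  ext s
  simp only [coe_map, Set.mem_image, mem_coe]
  constructor
  · induction s using Sym2.ind with | _ a b => ?_
    rcases a with u | u <;> rcases b with v | v <;> intro h <;>
      simp only [mem_edgeSet, corona_adj_inl_inl, corona_adj_inl_inr, corona_adj_inr_inl,
        corona_adj_inr_inr] at h
    · exact ⟨.inr s(u, v), by simpa using h, rfl⟩
    · exact ⟨.inl u, by simp, by simp [h]⟩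
    · exact ⟨.inl v, by simp, by simp [h, Sym2.eq_swap]⟩
  · rintro ⟨u | e, he, rfl⟩
    · simp
    · induction e using Sym2.ind
      simpa using he

lemma coe_subset_corona_edgeSet_iff [Fintype V] {G : SimpleGraph V} [Fintype G.edgeSet]
    {F : Finset (Sym2 (V ⊕ V))} :
    ↑F ⊆ G.corona.edgeSet ↔
      ∃ P : Finset (V ⊕ Sym2 V), P.toRight ⊆ G.edgeFinset ∧ P.map coronaEdge = F := by
  rw [corona_edgeSet, Finset.coe_subset, Finset.subset_map_iff]
  simp [Finset.subset_disjSum, eq_comm]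

section Domination

variable {H : SimpleGraph W}

def closedNbhd (H : SimpleGraph W) (v : W) : Set W := insert v (H.neighborSet v)

@[simp] lemma mem_closedNbhd {u v : W} : u ∈ H.closedNbhd v ↔ u = v ∨ H.Adj v u := Iff.rfl

lemma isDomSet_iff_forall_exists_mem_closedNbhd {D : Set W} :
    H.IsDomSet D ↔ ∀ v, ∃ u ∈ D, u ∈ H.closedNbhd v := by
  refine ⟨fun hD v => ?_, fun hD v hv => ?_⟩
  · by_cases hv : v ∈ D
    · exact ⟨v, hv, .inl rfl⟩
    · obtain ⟨u, hu, huv⟩ := hD v hv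
      exact ⟨u, hu, .inr huv.symm⟩
  · obtain ⟨u, hu, rfl | hvu⟩ := hD v
    · exact absurd hu hv
    · exact ⟨u, hu, hvu.symm⟩

variable [Fintype W]

lemma domNum_le_card {D : Finset W} (hD : H.IsDomSet ↑D) : H.domNum ≤ D.card :=
  Nat.sInf_le ⟨D, rfl, hD⟩

lemma le_domNum {n : ℕ} (h : ∀ D : Finset W, H.IsDomSet ↑D → n ≤ D.card) : n ≤ H.domNum :=
  le_csInf ⟨_, Finset.univ, rfl, fun v hv => absurd (Finset.mem_univ v) hv⟩
    (by rintro k ⟨D, rfl, hD⟩; exact h D hD)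

lemma card_le_domNum_of_pairwise_disjoint {ι : Type*} [Fintype ι] (x : ι → W)
    (hx : Pairwise fun i j => Disjoint (H.closedNbhd (x i)) (H.closedNbhd (x j))) :
    Fintype.card ι ≤ H.domNum := by
  refine le_domNum fun D hD => ?_
  choose f hfD hfx using fun i => isDomSet_iff_forall_exists_mem_closedNbhd.1 hD (x i)
  simpa using Finset.card_le_card_of_injOn f (s := .univ) (fun i _ => hfD i) fun i _ j _ hij =>
    hx.eq (Set.not_disjoint_iff.2 ⟨f i, hfx i, hij ▸ hfx j⟩)

end Domination

section Independence

open Finset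

variable [Fintype V] {G : SimpleGraph V}

lemma card_le_indepNumFin {A : Finset V} (hA : ∀ x ∈ A, ∀ y ∈ A, ¬ G.Adj x y) :
    #A ≤ G.indepNumFin :=
  le_csSup ⟨Fintype.card V, by rintro k ⟨A, rfl, -⟩; exact A.card_le_univ⟩ ⟨A, rfl, hA⟩

lemma exists_card_eq_indepNumFin (G : SimpleGraph V) :
    ∃ A : Finset V, #A = G.indepNumFin ∧ ∀ x ∈ A, ∀ y ∈ A, ¬ G.Adj x y :=
  Nat.sSup_mem (s := {k | ∃ A : Finset V, #A = k ∧ ∀ x ∈ A, ∀ y ∈ A, ¬ G.Adj x y})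
    ⟨0, ∅, by simp⟩ ⟨Fintype.card V, by rintro k ⟨A, rfl, -⟩; exact A.card_le_univ⟩

variable [Fintype G.edgeSet]

lemma card_le_indepNumFin_add_card_edges_within [DecidableEq V] (B : Finset V) :
    #B ≤ G.indepNumFin + #{e ∈ G.edgeFinset | ∀ u ∈ e, u ∈ B} := by
  set inside := {e ∈ G.edgeFinset | ∀ u ∈ e, u ∈ B}
  -- deleting one endpoint of every edge inside `B` leaves an independent set
  have hindep : ∀ x ∈ B \ inside.image (·.out.1), ∀ y ∈ B \ inside.image (·.out.1),
      ¬ G.Adj x y := by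
    intro x hx y hy hxy
    simp only [mem_sdiff, mem_image, not_exists, not_and] at hx hy
    have hxy_inside : s(x, y) ∈ inside := by simp [inside, hxy, hx.1, hy.1]
    rcases Sym2.mem_iff.1 (Sym2.out_fst_mem s(x, y)) with h | h
    · exact hx.2 _ hxy_inside h
    · exact hy.2 _ hxy_inside h
  calc #B ≤ #(B \ inside.image (·.out.1)) + #(inside.image (·.out.1)) :=
        card_le_card_sdiff_add_card
    _ ≤ G.indepNumFin + #inside := add_le_add (card_le_indepNumFin hindep) card_image_le

lemma card_add_card_le_card_edgeFinset_add_indepNumFin {B : Finset V} {E : Finset (Sym2 V)}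
    (hE : E ⊆ G.edgeFinset) (hBE : ∀ e ∈ E, ∃ u ∈ e, u ∉ B) :
    #B + #E ≤ #G.edgeFinset + G.indepNumFin := by
  classical
  have hdisj : Disjoint E {e ∈ G.edgeFinset | ∀ u ∈ e, u ∈ B} := by
    refine Finset.disjoint_left.2 fun e he he' => ?_
    obtain ⟨u, hu, huB⟩ := hBE e he
    exact huB ((mem_filter.1 he').2 u hu)
  have hedges := card_union_of_disjoint hdisj ▸ card_le_card (union_subset hE (filter_subset _ _))
  have hB := card_le_indepNumFin_add_card_edges_within (G := G) B
  omega

end Independence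

lemma domNum_corona [Fintype V] (G : SimpleGraph V) : G.corona.domNum = Fintype.card V := by
  refine le_antisymm ?_ ?_
  · have hD : G.corona.IsDomSet ((Finset.univ.map .inl : Finset (V ⊕ V)) : Set (V ⊕ V)) := by
      rintro (v | v) hv
      · simp at hv
      · exact ⟨.inl v, by simp, by simp⟩
    simpa using domNum_le_card hD
  · refine card_le_domNum_of_pairwise_disjoint (fun v => .inr v) fun u v huv =>
      Set.disjoint_left.2 ?_
    rintro (z | z) <;> simp only [mem_closedNbhd, corona_adj_inr_inl, corona_adj_inr_inr,
      reduceCtorEq, Sum.inr.injEq, or_false, false_or] <;>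
    rintro rfl rfl <;> exact huv rfl

section SubdividedCorona

variable [DecidableEq V] {G : SimpleGraph V} {P : Finset (V ⊕ Sym2 V)}

def leafNeighbor (P : Finset (V ⊕ Sym2 V)) (v : V) : (V ⊕ V) ⊕ {s // s ∈ P.map coronaEdge} :=
  if h : .inl v ∈ P then .inr ⟨coronaEdge (.inl v), Finset.mem_map_of_mem _ h⟩ else .inl (.inl v)

lemma subdiv_corona_adj_leaf_iff {z : (V ⊕ V) ⊕ {s // s ∈ P.map coronaEdge}} {v : V} :
    (G.corona.subdiv (P.map coronaEdge)).Adj z (.inl (.inr v)) ↔ z = leafNeighbor P v := by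
  rcases z with (u | u) | ⟨s, hs⟩
  · by_cases h : .inl v ∈ P <;> simp [leafNeighbor, h, eq_comm]
  · by_cases h : .inl v ∈ P <;> simp [leafNeighbor, h]
  · obtain ⟨x, hx, rfl⟩ := Finset.mem_map.1 hs
    rcases x with u | e <;> by_cases h : .inl v ∈ P <;> simp [leafNeighbor, h, eq_comm]
    rintro rfl
    exact h hx

lemma mem_closedNbhd_leaf_iff {z : (V ⊕ V) ⊕ {s // s ∈ P.map coronaEdge}} {v : V} :
    z ∈ (G.corona.subdiv (P.map coronaEdge)).closedNbhd (.inl (.inr v)) ↔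
      z = .inl (.inr v) ∨ z = leafNeighbor P v := by
  rw [mem_closedNbhd, adj_comm, subdiv_corona_adj_leaf_iff]

lemma leafNeighbor_injective : Function.Injective (leafNeighbor P) := by
  intro u v h
  by_cases hu : .inl u ∈ P <;> by_cases hv : .inl v ∈ P <;>
    simp [leafNeighbor, hu, hv] at h ⊢ <;> exact h

lemma leafNeighbor_ne_leaf (u v : V) : leafNeighbor P u ≠ .inl (.inr v) := by
  by_cases hu : .inl u ∈ P <;> simp [leafNeighbor, hu]

lemma pairwise_disjoint_closedNbhd_leaf :
    Pairwise fun u v : V => Disjoint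
      ((G.corona.subdiv (P.map coronaEdge)).closedNbhd (.inl (.inr u)))
      ((G.corona.subdiv (P.map coronaEdge)).closedNbhd (.inl (.inr v))) := by
  intro u v huv
  refine Set.disjoint_left.2 fun z hu hv => ?_
  rw [mem_closedNbhd_leaf_iff] at hu hv
  rcases hu with rfl | rfl <;> rcases hv with h | h
  · exact huv (by simpa using h)
  · exact leafNeighbor_ne_leaf v u h.symm
  · exact leafNeighbor_ne_leaf u v h
  · exact huv (leafNeighbor_injective h)

lemma card_le_domNum_subdiv_corona [Fintype V] :
    Fintype.card V ≤ (G.corona.subdiv (P.map coronaEdge)).domNum :=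
  card_le_domNum_of_pairwise_disjoint _ pairwise_disjoint_closedNbhd_leaf

lemma card_lt_domNum_subdiv_corona [Fintype V] {e : Sym2 V} (he : e ∈ P.toRight)
    (hends : ∀ u ∈ e, u ∈ P.toLeft) :
    Fintype.card V < (G.corona.subdiv (P.map coronaEdge)).domNum := by
  rw [Finset.mem_toRight] at he
  simp only [Finset.mem_toLeft] at hends
  let vertex (i : Option V) : (V ⊕ V) ⊕ {s // s ∈ P.map coronaEdge} :=
    i.elim (.inr ⟨coronaEdge (.inr e), Finset.mem_map_of_mem _ he⟩) fun v => .inl (.inr v)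
  have hdisj (v : V) : Disjoint
      ((G.corona.subdiv (P.map coronaEdge)).closedNbhd (vertex none))
      ((G.corona.subdiv (P.map coronaEdge)).closedNbhd (.inl (.inr v))) := by
    refine Set.disjoint_left.2 fun z hz hv => ?_
    rw [mem_closedNbhd_leaf_iff] at hv
    rcases z with (u | u) | ⟨s, hs⟩ <;> by_cases h : .inl v ∈ P <;>
      simp [vertex, leafNeighbor, h] at hz hv
    · exact h (hv ▸ hends u hz)
    · exact Sym2.map_inl_ne_mk_inr e _ _ (hz ▸ hv)
  have hpairwise : Pairwise fun i j : Option V =>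
      Disjoint ((G.corona.subdiv (P.map coronaEdge)).closedNbhd (vertex i))
        ((G.corona.subdiv (P.map coronaEdge)).closedNbhd (vertex j)) := by
    rintro (_ | u) (_ | v) huv
    · exact absurd rfl huv
    · exact hdisj v
    · exact (hdisj u).symm
    · exact pairwise_disjoint_closedNbhd_leaf (by simpa using huv)
  simpa using card_le_domNum_of_pairwise_disjoint vertex hpairwise

lemma domNum_subdiv_corona_le [Fintype V] (hP : ∀ e ∈ P.toRight, ∃ u ∈ e, u ∉ P.toLeft) :
    (G.corona.subdiv (P.map coronaEdge)).domNum ≤ Fintype.card V := by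
  have hD : (G.corona.subdiv (P.map coronaEdge)).IsDomSet
      ↑(Finset.univ.image (leafNeighbor P)) := by
    refine isDomSet_iff_forall_exists_mem_closedNbhd.2 fun y => ?_
    suffices ∃ v, leafNeighbor P v ∈ (G.corona.subdiv (P.map coronaEdge)).closedNbhd y by
      obtain ⟨v, hv⟩ := this
      exact ⟨_, by simp, hv⟩
    rcases y with (v | v) | ⟨s, hs⟩
    · exact ⟨v, by by_cases hv : .inl v ∈ P <;> simp [leafNeighbor, hv]⟩
    · exact ⟨v, mem_closedNbhd_leaf_iff.2 (.inr rfl)⟩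
    · obtain ⟨x, hx, rfl⟩ := Finset.mem_map.1 hs
      rcases x with v | e
      · exact ⟨v, by simp [leafNeighbor, hx]⟩
      · obtain ⟨u, hu, huP⟩ := hP e (Finset.mem_toRight.2 hx)
        rw [Finset.mem_toLeft] at huP
        exact ⟨u, by simp [leafNeighbor, huP, hu]⟩
  calc _ ≤ _ := domNum_le_card hD
    _ ≤ Fintype.card V := Finset.card_image_le.trans Finset.card_univ.le

end SubdividedCorona

end SimpleGraph

theorem stmt13_general {V : Type*} [Fintype V] (G : SimpleGraph V) [Fintype G.edgeSet] :
    G.corona.IsQCritical (G.edgeFinset.card + 1 + G.indepNumFin) := by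
  classical
  constructor
  · intro F hF hcard
    obtain ⟨P, hPG, rfl⟩ := coe_subset_corona_edgeSet_iff.1 hF
    rw [Finset.card_map, ← Finset.card_toLeft_add_card_toRight] at hcard
    obtain ⟨e, he, hends⟩ : ∃ e ∈ P.toRight, ∀ u ∈ e, u ∈ P.toLeft := by
      by_contra! hP
      have := card_add_card_le_card_edgeFinset_add_indepNumFin hPG hP
      omega
    rw [domNum_corona]
    exact card_lt_domNum_subdiv_corona he hends
  · obtain ⟨A, hAcard, hA⟩ := exists_card_eq_indepNumFin G
    refine ⟨(A.disjSum G.edgeFinset).map coronaEdge,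
      coe_subset_corona_edgeSet_iff.2 ⟨_, by simp, rfl⟩, by simp [hAcard]; omega, ?_⟩
    rw [domNum_corona]
    refine le_antisymm (domNum_subdiv_corona_le fun e he => ?_) card_le_domNum_subdiv_corona
    induction e using Sym2.ind with | _ x y =>
    rw [Finset.toRight_disjSum, mem_edgeFinset, mem_edgeSet] at he
    by_cases hx : x ∈ A
    · exact ⟨y, Sym2.mem_mk_right x y, by simpa using fun hy => hA x hx y hy he⟩
    · exact ⟨x, Sym2.mem_mk_left x y, by simpa using hx⟩

theorem stmt13 {V : Type*} [Fintype V] (G : SimpleGraph V) [Fintype G.edgeSet]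
    (h : G.Connected) :
    G.corona.IsQCritical (G.edgeFinset.card + 1 + G.indepNumFin) :=
  stmt13_general G
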